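/- Let λ ∈ ℂ and let f : ℍ → ℂ be smooth with f(z+1) = f(z) for all z ∈ ℍ and Δf = λ·f pointwise on ℍ. Then for every m ∈ ℤ, the m-th Fourier coefficient f_m is twice differentiable on (0,∞) and satisfies the ordinary differential equation f_m''(y) = (4π²m² − λ·y^{−2}) · f_m(y) for all y > 0. -/

import Mathlib

open Complex Real

/-- The `m`-th Fourier coefficient `f_m(y) = ∫₀¹ f(x + iy) e^{-2πimx} dx` of a `1`-periodic
function on the upper half-plane. -/
noncomputable def fourierCoeffUHP (f : ℂ → ℂ) (m : ℤ) (y : ℝ) : ℂ :=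
  ∫ x in (0:ℝ)..1, f (x + y * I) * Complex.exp (-2 * Real.pi * I * m * x)

namespace FourierODEAux

open MeasureTheory Set Filter Topology

/-- The character `x ↦ e^{-2πimx}`. -/
noncomputable def eChar (m : ℤ) (x : ℝ) : ℂ := Complex.exp (-2 * Real.pi * I * m * x)

lemma eChar_continuous (m : ℤ) : Continuous (eChar m) := by
  unfold eChar; fun_prop

lemma eChar_hasDerivAt (m : ℤ) (x : ℝ) :
    HasDerivAt (eChar m) ((-2 * Real.pi * I * m) * eChar m x) x := by
  have h1 : HasDerivAt (fun t : ℝ => (t : ℂ)) 1 x := by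
    simpa using (hasDerivAt_id x).ofReal_comp
  have h2 := (h1.const_mul ((-2 : ℂ) * Real.pi * I * m)).cexp
  have h3 : eChar m = fun x : ℝ => Complex.exp ((-2 : ℂ) * Real.pi * I * m * x) := rfl
  rw [h3]
  convert h2 using 1
  ring

lemma eChar_norm (m : ℤ) (x : ℝ) : ‖eChar m x‖ = 1 := by
  have h : (-2 * (Real.pi : ℂ) * I * m * x) = ((-2 * Real.pi * m * x : ℝ) : ℂ) * I := by
    push_cast; ring
  rw [eChar, h, Complex.norm_exp_ofReal_mul_I]

lemma eChar_periodic (m : ℤ) : Function.Periodic (eChar m) 1 := by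
  intro x
  have h : (-2 * (Real.pi : ℂ) * I * m * ((x : ℂ) + 1))
      = -2 * Real.pi * I * m * x + (-m : ℤ) * (2 * Real.pi * I) := by
    push_cast; ring
  simp only [eChar]
  push_cast
  rw [h, Complex.exp_add, Complex.exp_int_mul_two_pi_mul_I, mul_one]

/-- Upper half plane as subset of `ℝ × ℝ`. -/
def UHP : Set (ℝ × ℝ) := {p : ℝ × ℝ | 0 < p.2}

/-- A function on the upper half plane from `f : ℂ → ℂ`. -/
def Gfun (f : ℂ → ℂ) : ℝ × ℝ → ℂ := fun p => f (p.1 + p.2 * I)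

/-- Partial derivative in the second (vertical) variable. -/
noncomputable def DY (H : ℝ × ℝ → ℂ) : ℝ × ℝ → ℂ := fun p => fderiv ℝ H p (0, 1)

/-- Partial derivative in the first (horizontal) variable. -/
noncomputable def DX (H : ℝ × ℝ → ℂ) : ℝ × ℝ → ℂ := fun p => fderiv ℝ H p (1, 0)

end FourierODEAux

open MeasureTheory Set Filter Topology FourierODEAux

set_option maxHeartbeats 2000000 in
/-- If `f : ℍ → ℂ` is smooth, `1`-periodic and satisfies `Δf = λ·f` pointwise,
then each Fourier coefficient `f_m` is twice differentiable on `(0, ∞)` and satisfies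
`f_m''(y) = (4π²m² − λ·y⁻²) · f_m(y)` for all `y > 0`. -/
theorem fourierCoeff_ODE (lam : ℂ) (f : ℂ → ℂ)
    (hsmooth : ContDiffOn ℝ (⊤ : ℕ∞) (fun p : ℝ × ℝ => f (p.1 + p.2 * I)) {p : ℝ × ℝ | 0 < p.2})
    (hper : ∀ z : ℂ, 0 < z.im → f (z + 1) = f z)
    (heig : ∀ z : ℂ, 0 < z.im →
      -(z.im : ℂ) ^ 2 *
          (deriv (fun x : ℝ => deriv (fun x' : ℝ => f (x' + z.im * I)) x) z.re +
           deriv (fun y : ℝ => deriv (fun y' : ℝ => f (z.re + y' * I)) y) z.im)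
        = lam * f z)
    (m : ℤ) :
    (∀ y : ℝ, 0 < y → DifferentiableAt ℝ (fourierCoeffUHP f m) y) ∧
    (∀ y : ℝ, 0 < y → DifferentiableAt ℝ (deriv (fourierCoeffUHP f m)) y) ∧
    (∀ y : ℝ, 0 < y →
      deriv (deriv (fourierCoeffUHP f m)) y
        = ((4 * Real.pi ^ 2 * m ^ 2 : ℂ) - lam * ((y : ℂ)) ^ (-2 : ℤ)) *
            fourierCoeffUHP f m y) := by
  let U : Set (ℝ × ℝ) := UHP
  have hU : IsOpen U := isOpen_lt continuous_const continuous_snd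
  have hmemU : ∀ (a b : ℝ), 0 < b → ((a, b) : ℝ × ℝ) ∈ U := fun a b h => h
  let G : ℝ × ℝ → ℂ := Gfun f
  have hG : ContDiffOn ℝ (⊤ : ℕ∞) G U := hsmooth
  let Gy : ℝ × ℝ → ℂ := DY G
  let Gx : ℝ × ℝ → ℂ := DX G
  let Gyy : ℝ × ℝ → ℂ := DY Gy
  let Gxx : ℝ × ℝ → ℂ := DX Gx
  have hGdef : G = fun p : ℝ × ℝ => f (p.1 + p.2 * I) := rfl
  have htop : ((⊤ : ℕ∞) : WithTop ℕ∞) + 1 ≤ ((⊤ : ℕ∞) : WithTop ℕ∞) := by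
    rw [← WithTop.coe_one, ← WithTop.coe_add, top_add]
  have hGfd : ContDiffOn ℝ (⊤ : ℕ∞) (fun p => fderiv ℝ G p) U := hG.fderiv_of_isOpen hU htop
  have hGxfd : ContDiffOn ℝ (⊤ : ℕ∞) (fun p => fderiv ℝ Gx p) U := by
    have := (hGfd.clm_apply (contDiffOn_const (c := ((1:ℝ),(0:ℝ))))).fderiv_of_isOpen hU htop
    exact this
  have hGyfd : ContDiffOn ℝ (⊤ : ℕ∞) (fun p => fderiv ℝ Gy p) U := by
    have := (hGfd.clm_apply (contDiffOn_const (c := ((0:ℝ),(1:ℝ))))).fderiv_of_isOpen hU htop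
    exact this
  have hGysm : ContDiffOn ℝ (⊤ : ℕ∞) Gy U := hGfd.clm_apply contDiffOn_const
  have hGxsm : ContDiffOn ℝ (⊤ : ℕ∞) Gx U := hGfd.clm_apply contDiffOn_const
  have hGyysm : ContDiffOn ℝ (⊤ : ℕ∞) Gyy U := hGyfd.clm_apply contDiffOn_const
  have hGxxsm : ContDiffOn ℝ (⊤ : ℕ∞) Gxx U := hGxfd.clm_apply contDiffOn_const
  -- directional derivatives as 1-variable derivatives
  have keyY : ∀ (H : ℝ × ℝ → ℂ), ContDiffOn ℝ (⊤ : ℕ∞) H U → ∀ p ∈ U,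
      HasDerivAt (fun t => H (p.1, t)) (DY H p) p.2 := by
    intro H hH p hp
    have hd : DifferentiableAt ℝ H p :=
      (hH.contDiffAt (hU.mem_nhds hp)).differentiableAt (by simp)
    have hline : HasDerivAt (fun t : ℝ => ((p.1, t) : ℝ × ℝ)) ((0 : ℝ), (1 : ℝ)) p.2 :=
      (hasDerivAt_const _ _).prodMk (hasDerivAt_id _)
    have h2 : HasFDerivAt H (fderiv ℝ H p) ((fun t : ℝ => ((p.1, t) : ℝ × ℝ)) p.2) := by
      simpa using hd.hasFDerivAt
    exact h2.comp_hasDerivAt p.2 hline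
  have keyX : ∀ (H : ℝ × ℝ → ℂ), ContDiffOn ℝ (⊤ : ℕ∞) H U → ∀ p ∈ U,
      HasDerivAt (fun t => H (t, p.2)) (DX H p) p.1 := by
    intro H hH p hp
    have hd : DifferentiableAt ℝ H p :=
      (hH.contDiffAt (hU.mem_nhds hp)).differentiableAt (by simp)
    have hline : HasDerivAt (fun t : ℝ => ((t, p.2) : ℝ × ℝ)) ((1 : ℝ), (0 : ℝ)) p.1 :=
      (hasDerivAt_id _).prodMk (hasDerivAt_const _ _)
    have h2 : HasFDerivAt H (fderiv ℝ H p) ((fun t : ℝ => ((t, p.2) : ℝ × ℝ)) p.1) := by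
      simpa using hd.hasFDerivAt
    exact h2.comp_hasDerivAt p.1 hline
  have hDyG : ∀ p ∈ U, HasDerivAt (fun t => G (p.1, t)) (Gy p) p.2 := keyY G hG
  have hDyGy : ∀ p ∈ U, HasDerivAt (fun t => Gy (p.1, t)) (Gyy p) p.2 := keyY Gy hGysm
  have hDxG : ∀ p ∈ U, HasDerivAt (fun t => G (t, p.2)) (Gx p) p.1 := keyX G hG
  have hDxGx : ∀ p ∈ U, HasDerivAt (fun t => Gx (t, p.2)) (Gxx p) p.1 := keyX Gx hGxsm
  -- horizontal slices are continuous
  have hslice : ∀ (H : ℝ × ℝ → ℂ), ContinuousOn H U → ∀ s : ℝ, 0 < s →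
      Continuous (fun x : ℝ => H (x, s)) := by
    intro H hH s hs
    rw [continuous_iff_continuousAt]
    intro x
    have hin : ContinuousAt (fun t : ℝ => ((t, s) : ℝ × ℝ)) x :=
      (continuous_id.prodMk continuous_const).continuousAt
    have hcomp := ContinuousAt.comp (f := fun t : ℝ => ((t, s) : ℝ × ℝ)) (x := x)
      (hH.continuousAt (hU.mem_nhds (hmemU x s hs))) hin
    exact hcomp
  have hGc : ContinuousOn G U := hG.continuousOn
  have hGyc : ContinuousOn Gy U := hGysm.continuousOn
  have hGxc : ContinuousOn Gx U := hGxsm.continuousOn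
  have hGyyc : ContinuousOn Gyy U := hGyysm.continuousOn
  have hGxxc : ContinuousOn Gxx U := hGxxsm.continuousOn
  -- differentiation under the integral sign
  have keyInt : ∀ (H H' : ℝ × ℝ → ℂ), ContinuousOn H U → ContinuousOn H' U →
      (∀ p ∈ U, HasDerivAt (fun t => H (p.1, t)) (H' p) p.2) →
      ∀ y : ℝ, 0 < y →
        HasDerivAt (fun s => ∫ x in (0:ℝ)..1, H (x, s) * eChar m x)
          (∫ x in (0:ℝ)..1, H' (x, y) * eChar m x) y := by
    intro H H' hH hH' hder y hy
    have hε0 : 0 < y / 2 := by positivity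
    set K : Set (ℝ × ℝ) := Icc (0:ℝ) 1 ×ˢ Icc (y/2) (3*y/2) with hKdef
    have hKU : K ⊆ U := by
      intro p hp
      exact lt_of_lt_of_le hε0 hp.2.1
    have hKc : IsCompact K := isCompact_Icc.prod isCompact_Icc
    obtain ⟨C, hC⟩ := hKc.exists_bound_of_continuousOn (hH'.mono hKU)
    have hmeas : ∀ᶠ s in 𝓝 y, AEStronglyMeasurable
        (fun x : ℝ => H (x, s) * eChar m x) (volume.restrict (Set.uIoc (0:ℝ) 1)) := by
      filter_upwards [eventually_gt_nhds hy] with s hs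
      exact ((hslice H hH s hs).mul (eChar_continuous m)).aestronglyMeasurable
    have hint : IntervalIntegrable (fun x : ℝ => H (x, y) * eChar m x) volume 0 1 :=
      ((hslice H hH y hy).mul (eChar_continuous m)).intervalIntegrable _ _
    have hmeas' : AEStronglyMeasurable
        (fun x : ℝ => H' (x, y) * eChar m x) (volume.restrict (Set.uIoc (0:ℝ) 1)) :=
      ((hslice H' hH' y hy).mul (eChar_continuous m)).aestronglyMeasurable
    have hbound : ∀ᵐ t ∂(volume : Measure ℝ), t ∈ Set.uIoc (0:ℝ) 1 →
        ∀ s ∈ Metric.ball y (y/2), ‖H' (t, s) * eChar m t‖ ≤ C := by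
      refine Eventually.of_forall ?_
      intro t ht s hs
      have ht' : t ∈ Set.Ioc (0:ℝ) 1 := by
        simpa [Set.uIoc_of_le (by norm_num : (0:ℝ) ≤ 1)] using ht
      have hts : ((t, s) : ℝ × ℝ) ∈ K := by
        constructor
        · exact ⟨ht'.1.le, ht'.2⟩
        · rw [Metric.mem_ball, Real.dist_eq, abs_lt] at hs
          constructor <;> [linarith; linarith]
      have := hC (t, s) hts
      rw [norm_mul, eChar_norm, mul_one]
      exact this
    have hdiff : ∀ᵐ t ∂(volume : Measure ℝ), t ∈ Set.uIoc (0:ℝ) 1 →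
        ∀ s ∈ Metric.ball y (y/2),
          HasDerivAt (fun s => H (t, s) * eChar m t) (H' (t, s) * eChar m t) s := by
      refine Eventually.of_forall ?_
      intro t _ s hs
      rw [Metric.mem_ball, Real.dist_eq, abs_lt] at hs
      have hs0 : 0 < s := by linarith
      exact (hder (t, s) (hmemU t s hs0)).mul_const (eChar m t)
    exact (intervalIntegral.hasDerivAt_integral_of_dominated_loc_of_deriv_le (Metric.ball_mem_nhds y hε0)
      hmeas hint hmeas' hbound (intervalIntegrable_const) hdiff).2
  -- first derivative
  have hfm : ∀ s : ℝ, fourierCoeffUHP f m s = ∫ x in (0:ℝ)..1, G (x, s) * eChar m x := by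
    intro s
    rfl
  have hD1 : ∀ y : ℝ, 0 < y → HasDerivAt (fourierCoeffUHP f m)
      (∫ x in (0:ℝ)..1, Gy (x, y) * eChar m x) y := by
    intro y hy
    have h := keyInt G Gy hGc hGyc hDyG y hy
    have : fourierCoeffUHP f m = fun s => ∫ x in (0:ℝ)..1, G (x, s) * eChar m x :=
      funext hfm
    rw [this]
    exact h
  have hD2 : ∀ y : ℝ, 0 < y → HasDerivAt (fun s => ∫ x in (0:ℝ)..1, Gy (x, s) * eChar m x)
      (∫ x in (0:ℝ)..1, Gyy (x, y) * eChar m x) y :=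
    keyInt Gy Gyy hGyc hGyyc hDyGy
  have hEv : ∀ y : ℝ, 0 < y →
      deriv (fourierCoeffUHP f m) =ᶠ[𝓝 y] fun s => ∫ x in (0:ℝ)..1, Gy (x, s) * eChar m x := by
    intro y hy
    filter_upwards [eventually_gt_nhds hy] with s hs
    exact (hD1 s hs).deriv
  have hD2' : ∀ y : ℝ, 0 < y → HasDerivAt (deriv (fourierCoeffUHP f m))
      (∫ x in (0:ℝ)..1, Gyy (x, y) * eChar m x) y := by
    intro y hy
    exact (hD2 y hy).congr_of_eventuallyEq (hEv y hy)
  refine ⟨fun y hy => (hD1 y hy).differentiableAt,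
    fun y hy => (hD2' y hy).differentiableAt, ?_⟩
  intro y hy
  have hyU : ∀ x : ℝ, ((x, y) : ℝ × ℝ) ∈ U := fun x => hmemU x y hy
  -- periodicity of slices
  have hGper : Function.Periodic (fun x => G (x, y)) 1 := by
    intro x
    have hz : (0 : ℝ) < ((x : ℂ) + y * I).im := by simpa using hy
    have h1 := hper ((x : ℂ) + y * I) hz
    have h2 : ((x + 1 : ℝ) : ℂ) + y * I = ((x : ℂ) + y * I) + 1 := by push_cast; ring
    show Gfun f (x + 1, y) = Gfun f (x, y)
    simp only [FourierODEAux.Gfun]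
    rw [h2]
    exact h1
  have hGxper : Function.Periodic (fun x => Gx (x, y)) 1 := by
    have heq : (fun x => Gx (x, y)) = deriv (fun x => G (x, y)) := by
      funext x
      exact ((hDxG (x, y) (hyU x)).deriv).symm
    rw [heq]
    intro x
    have h1 : deriv (fun t => G (t, y)) (x + 1) = deriv (fun t => G (t + 1, y)) x :=
      (deriv_comp_add_const _ _ _).symm
    rw [h1, show (fun t => G (t + 1, y)) = fun t => G (t, y) from funext fun t => hGper t]
  -- integration by parts
  have parts : ∀ (u u' : ℝ → ℂ), (∀ x : ℝ, HasDerivAt u (u' x) x) → Continuous u' →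
      Function.Periodic u 1 →
      ∫ x in (0:ℝ)..1, u' x * eChar m x
        = (2 * Real.pi * I * m) * ∫ x in (0:ℝ)..1, u x * eChar m x := by
    intro u u' hd hc hp
    have hu : ∀ x ∈ uIcc (0:ℝ) 1, HasDerivAt u (u' x) x := fun x _ => hd x
    have hv : ∀ x ∈ uIcc (0:ℝ) 1,
        HasDerivAt (eChar m) ((-2 * Real.pi * I * m) * eChar m x) x :=
      fun x _ => eChar_hasDerivAt m x
    have hucont : Continuous u := by
      rw [continuous_iff_continuousAt]
      exact fun x => (hd x).differentiableAt.continuousAt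
    have hui : IntervalIntegrable u' volume 0 1 := hc.intervalIntegrable _ _
    have hvi : IntervalIntegrable (fun x : ℝ => (-2 * Real.pi * I * m) * eChar m x) volume 0 1 :=
      (continuous_const.mul (eChar_continuous m)).intervalIntegrable _ _
    have H := intervalIntegral.integral_mul_deriv_eq_deriv_mul hu hv hui hvi
    have hb : u 1 * eChar m 1 - u 0 * eChar m 0 = 0 := by
      have h1 : u 1 = u 0 := by simpa using hp 0
      have h2 : eChar m 1 = eChar m 0 := by simpa using eChar_periodic m 0
      rw [h1, h2]; ring
    have hL : (∫ x in (0:ℝ)..1, u x * ((-2 * Real.pi * I * m) * eChar m x))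
        = (-2 * (Real.pi : ℂ) * I * m) * ∫ x in (0:ℝ)..1, u x * eChar m x := by
      rw [← intervalIntegral.integral_const_mul]
      exact intervalIntegral.integral_congr fun x _ => by ring
    rw [hL, hb] at H
    linear_combination H
  have hI1 : ∫ x in (0:ℝ)..1, Gx (x, y) * eChar m x
      = (2 * Real.pi * I * m) * ∫ x in (0:ℝ)..1, G (x, y) * eChar m x :=
    parts (fun x => G (x, y)) (fun x => Gx (x, y)) (fun x => hDxG (x, y) (hyU x))
      (hslice Gx hGxc y hy) hGper
  have hI2 : ∫ x in (0:ℝ)..1, Gxx (x, y) * eChar m x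
      = (2 * Real.pi * I * m) * ∫ x in (0:ℝ)..1, Gx (x, y) * eChar m x :=
    parts (fun x => Gx (x, y)) (fun x => Gxx (x, y)) (fun x => hDxGx (x, y) (hyU x))
      (hslice Gxx hGxxc y hy) hGxper
  -- the eigenvalue equation pointwise
  have hy0 : ((y : ℂ)) ≠ 0 := Complex.ofReal_ne_zero.2 hy.ne'
  have hpt : ∀ x : ℝ, Gyy (x, y)
      = (-(lam) * (((y : ℂ)) ^ 2)⁻¹) * G (x, y) - Gxx (x, y) := by
    intro x
    have hz : (0 : ℝ) < ((x : ℂ) + y * I).im := by simpa using hy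
    have hzre : ((x : ℂ) + y * I).re = x := by simp
    have hzim : ((x : ℂ) + y * I).im = y := by simp
    have hz2 := heig ((x : ℂ) + y * I) hz
    rw [hzre, hzim] at hz2
    -- identify the x-part
    have hfunx : (fun x' : ℝ => deriv (fun x'' : ℝ => f ((x'' : ℂ) + (y : ℝ) * I)) x')
        = fun x' => Gx (x', y) := by
      funext x'
      exact (hDxG (x', y) (hyU x')).deriv
    have hxx : deriv (fun x' : ℝ => deriv (fun x'' : ℝ => f ((x'' : ℂ) + (y : ℝ) * I)) x') x
        = Gxx (x, y) := by
      rw [hfunx]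
      exact (hDxGx (x, y) (hyU x)).deriv
    -- identify the y-part
    have hfuny : (fun y' : ℝ => deriv (fun y'' : ℝ => f ((x : ℂ) + (y'' : ℝ) * I)) y')
        =ᶠ[𝓝 y] fun y' => Gy (x, y') := by
      filter_upwards [eventually_gt_nhds hy] with y' hy'
      exact (hDyG (x, y') (hmemU x y' hy')).deriv
    have hyy : deriv (fun y' : ℝ => deriv (fun y'' : ℝ => f ((x : ℂ) + (y'' : ℝ) * I)) y') y
        = Gyy (x, y) := by
      rw [hfuny.deriv_eq]
      exact (hDyGy (x, y) (hyU x)).deriv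
    rw [hxx, hyy] at hz2
    have hG0 : f ((x : ℂ) + (y : ℝ) * I) = G (x, y) := rfl
    rw [hG0] at hz2
    have hysq : ((y : ℂ)) ^ 2 ≠ 0 := pow_ne_zero _ hy0
    field_simp
    linear_combination -hz2
  -- assemble
  have hd2 : deriv (deriv (fourierCoeffUHP f m)) y
      = ∫ x in (0:ℝ)..1, Gyy (x, y) * eChar m x := (hD2' y hy).deriv
  have hsplit : ∫ x in (0:ℝ)..1, Gyy (x, y) * eChar m x
      = (-(lam) * (((y : ℂ)) ^ 2)⁻¹) * (∫ x in (0:ℝ)..1, G (x, y) * eChar m x)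
        - ∫ x in (0:ℝ)..1, Gxx (x, y) * eChar m x := by
    have h1 : (∫ x in (0:ℝ)..1, Gyy (x, y) * eChar m x)
        = ∫ x in (0:ℝ)..1,
            ((-(lam) * (((y : ℂ)) ^ 2)⁻¹) * (G (x, y) * eChar m x) - Gxx (x, y) * eChar m x) := by
      refine intervalIntegral.integral_congr fun x _ => ?_
      rw [hpt x]; ring
    rw [h1, intervalIntegral.integral_sub, intervalIntegral.integral_const_mul]
    · exact (continuous_const.mul (((hslice G hGc y hy)).mul (eChar_continuous m))).intervalIntegrable _ _
    · exact (((hslice Gxx hGxxc y hy)).mul (eChar_continuous m)).intervalIntegrable _ _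
  rw [hd2, hsplit, hI2, hI1, hfm y]
  have hzp : ((y : ℂ)) ^ (-2 : ℤ) = (((y : ℂ)) ^ 2)⁻¹ := by
    rw [show ((-2 : ℤ)) = -((2 : ℕ) : ℤ) from rfl, zpow_neg, zpow_natCast]
  rw [hzp]
  have hIsq : (I : ℂ) ^ 2 = -1 := Complex.I_sq
  set A := ∫ x in (0:ℝ)..1, G (x, y) * eChar m x with hA
  linear_combination (-4 * (Real.pi : ℂ) ^ 2 * (m : ℂ) ^ 2 * A) * hIsq
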